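/- Let A = {x = (x₁,x₂,x₃,…) ∈ ℓ₂ : 0 ≤ x_n ≤ 10ⁿ for all n ≥ 1}. Then A is closed, convex and linearly bounded. Moreover, defining x⁰ = (0,0,0,…), x^k ∈ A by x^k_n = 10ⁿ if n ≤ k and x^k_n = 0 otherwise (k ≥ 1), a₀ = 0, a_k = Σ_{n=1}^{k} 10ⁿ, and γ:[0,∞)→A by γ(t) = (1 − (t−a_k)/10^{k+1})·x^k + ((t−a_k)/10^{k+1})·x^{k+1} for a_k ≤ t < a_{k+1} (k ∈ ℕ), the curve γ satisfies √(3/11)·|s−t| ≤ ‖γ(s)−γ(t)‖₂ ≤ |s−t| for all s,t ≥ 0; in particular, A contains a √(11/3)-quasi-geodesic ray. -/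
import Mathlib


open Set Filter Metric

section Defs

variable {X : Type*} [MetricSpace X]

/-- A unit-speed geodesic defined on `[a, b]`. -/
def IsGeodesicOn (γ : ℝ → X) (a b : ℝ) : Prop :=
  ∀ s ∈ Set.Icc a b, ∀ t ∈ Set.Icc a b, dist (γ s) (γ t) = |s - t|

/-- `S` is a geodesic segment joining `x` and `y`. -/
def IsGeodesicSegment (S : Set X) (x y : X) : Prop :=
  ∃ (a b : ℝ) (γ : ℝ → X), a ≤ b ∧ IsGeodesicOn γ a b ∧ γ a = x ∧ γ b = y ∧
    S = γ '' Set.Icc a b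

/-- A geodesic space: every two points are joined by a geodesic segment. -/
def GeodesicSpace (X : Type*) [MetricSpace X] : Prop :=
  ∀ x y : X, ∃ S : Set X, IsGeodesicSegment S x y

/-- A uniquely geodesic space. -/
def UniquelyGeodesic (X : Type*) [MetricSpace X] : Prop :=
  ∀ x y : X, ∃! S : Set X, IsGeodesicSegment S x y

/-- `S` is contained in the closed `M`-neighborhood of `T`. -/
def InClosedNbhd (S T : Set X) (M : ℝ) : Prop :=
  ∀ p ∈ S, ∃ q ∈ T, dist p q ≤ M

/-- A triangle with sides `S1, S2, S3` is `M`-slim. -/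
def SlimTriangle (S1 S2 S3 : Set X) (M : ℝ) : Prop :=
  InClosedNbhd S1 (S2 ∪ S3) M ∧ InClosedNbhd S2 (S1 ∪ S3) M ∧ InClosedNbhd S3 (S1 ∪ S2) M

/-- `X` is `δ`-hyperbolic: every geodesic triangle is `δ`-slim. -/
def DeltaHyperbolic (X : Type*) [MetricSpace X] (δ : ℝ) : Prop :=
  ∀ x y z : X, ∀ S1 S2 S3 : Set X,
    IsGeodesicSegment S1 x y → IsGeodesicSegment S2 y z → IsGeodesicSegment S3 z x →
    SlimTriangle S1 S2 S3 δ

/-- A geodesic ray `γ : [0, ∞) → X`. -/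
def IsGeodesicRay (γ : ℝ → X) : Prop :=
  ∀ s ∈ Set.Ici (0:ℝ), ∀ t ∈ Set.Ici (0:ℝ), dist (γ s) (γ t) = |s - t|

/-- A set is geodesically bounded if it contains no geodesic ray. -/
def GeodesicallyBounded (A : Set X) : Prop :=
  ¬ ∃ γ : ℝ → X, IsGeodesicRay γ ∧ ∀ t ∈ Set.Ici (0:ℝ), γ t ∈ A

/-- A directional curve `γ : [0, ∞) → X` (with some constant `b ≥ 0`). -/
def IsDirectionalCurve (γ : ℝ → X) : Prop :=
  ∃ b : ℝ, 0 ≤ b ∧ ∀ s ∈ Set.Ici (0:ℝ), ∀ t ∈ Set.Ici (0:ℝ),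
    |s - t| - b ≤ dist (γ s) (γ t) ∧ dist (γ s) (γ t) ≤ |s - t|

/-- A set is directionally bounded if it contains no directional curve. -/
def DirectionallyBounded (A : Set X) : Prop :=
  ¬ ∃ γ : ℝ → X, IsDirectionalCurve γ ∧ ∀ t ∈ Set.Ici (0:ℝ), γ t ∈ A

/-- A subset of a geodesic space is convex if every geodesic segment joining two of its
points is contained in it. -/
def GeodesicConvex (A : Set X) : Prop :=
  ∀ x ∈ A, ∀ y ∈ A, ∀ S : Set X, IsGeodesicSegment S x y → S ⊆ A

/-- The comparison point in the Euclidean plane: the point on the segment from `x'` to `y'`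
(of length `L`) at distance `t` from `x'`. -/
noncomputable def cmpPt (x' y' : EuclideanSpace ℝ (Fin 2)) (L t : ℝ) :
    EuclideanSpace ℝ (Fin 2) :=
  AffineMap.lineMap x' y' (t / L)

/-- `X` is a CAT(0) space: it is geodesic and for every geodesic triangle and every
comparison triangle in the Euclidean plane, distances between points on the triangle are
bounded by the distances between the corresponding comparison points. -/
def CAT0Space (X : Type*) [MetricSpace X] : Prop :=
  GeodesicSpace X ∧
  ∀ (x y z : X) (γ1 γ2 γ3 : ℝ → X),
    IsGeodesicOn γ1 0 (dist x y) → γ1 0 = x → γ1 (dist x y) = y →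
    IsGeodesicOn γ2 0 (dist y z) → γ2 0 = y → γ2 (dist y z) = z →
    IsGeodesicOn γ3 0 (dist z x) → γ3 0 = z → γ3 (dist z x) = x →
    ∀ x' y' z' : EuclideanSpace ℝ (Fin 2),
      dist x' y' = dist x y → dist y' z' = dist y z → dist z' x' = dist z x →
      (∀ s ∈ Set.Icc (0:ℝ) (dist x y), ∀ t ∈ Set.Icc (0:ℝ) (dist y z),
        dist (γ1 s) (γ2 t) ≤ dist (cmpPt x' y' (dist x y) s) (cmpPt y' z' (dist y z) t)) ∧
      (∀ s ∈ Set.Icc (0:ℝ) (dist y z), ∀ t ∈ Set.Icc (0:ℝ) (dist z x),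
        dist (γ2 s) (γ3 t) ≤ dist (cmpPt y' z' (dist y z) s) (cmpPt z' x' (dist z x) t)) ∧
      (∀ s ∈ Set.Icc (0:ℝ) (dist z x), ∀ t ∈ Set.Icc (0:ℝ) (dist x y),
        dist (γ3 s) (γ1 t) ≤ dist (cmpPt z' x' (dist z x) s) (cmpPt x' y' (dist x y) t))

/-- Busemann convexity. -/
def BusemannConvex (X : Type*) [MetricSpace X] : Prop :=
  GeodesicSpace X ∧
  ∀ (a b c d : ℝ) (γ σ : ℝ → X), a ≤ b → c ≤ d →
    IsGeodesicOn γ a b → IsGeodesicOn σ c d →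
    ∀ t ∈ Set.Icc (0:ℝ) 1,
      dist (γ ((1-t)*a + t*b)) (σ ((1-t)*c + t*d)) ≤
        (1-t) * dist (γ a) (σ c) + t * dist (γ b) (σ d)

/-- A `(lam, eps)`-quasi-geodesic defined on `[a, b]`. -/
def IsQuasiGeodesicOn (lam eps : ℝ) (γ : ℝ → X) (a b : ℝ) : Prop :=
  ∀ s ∈ Set.Icc a b, ∀ t ∈ Set.Icc a b,
    (1/lam) * |s - t| - eps ≤ dist (γ s) (γ t) ∧ dist (γ s) (γ t) ≤ lam * |s - t| + eps

/-- A `(lam, eps)`-quasi-geodesic ray. -/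
def IsQuasiGeodesicRay (lam eps : ℝ) (γ : ℝ → X) : Prop :=
  ∀ s ∈ Set.Ici (0:ℝ), ∀ t ∈ Set.Ici (0:ℝ),
    (1/lam) * |s - t| - eps ≤ dist (γ s) (γ t) ∧ dist (γ s) (γ t) ≤ lam * |s - t| + eps

/-- A `k`-local `lam`-quasi-geodesic ray: a `(lam, eps)`-quasi-geodesic ray locally,
for every `eps > 0`. -/
def IsLocalQuasiGeodesicRay (k lam : ℝ) (γ : ℝ → X) : Prop :=
  ∀ eps > (0:ℝ), ∀ s ∈ Set.Ici (0:ℝ), ∀ t ∈ Set.Ici (0:ℝ), |s - t| ≤ k →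
    (1/lam) * |s - t| - eps ≤ dist (γ s) (γ t) ∧ dist (γ s) (γ t) ≤ lam * |s - t| + eps

/-- `S` is the image of a `lam`-quasi-geodesic joining `x` and `y`
(i.e. a `(lam, eps)`-quasi-geodesic for every `eps > 0`). -/
def IsQuasiGeodesicSegment (lam : ℝ) (S : Set X) (x y : X) : Prop :=
  ∃ (a b : ℝ) (γ : ℝ → X), a ≤ b ∧ (∀ eps > (0:ℝ), IsQuasiGeodesicOn lam eps γ a b) ∧
    γ a = x ∧ γ b = y ∧ S = γ '' Set.Icc a b

/-- Every `lam`-quasi-geodesic triangle in `X` is `M`-slim. -/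
def QuasiGeodesicTrianglesSlim (X : Type*) [MetricSpace X] (lam M : ℝ) : Prop :=
  ∀ x y z : X, ∀ S1 S2 S3 : Set X,
    IsQuasiGeodesicSegment lam S1 x y → IsQuasiGeodesicSegment lam S2 y z →
    IsQuasiGeodesicSegment lam S3 z x → SlimTriangle S1 S2 S3 M

/-- A play of the Lion-Man game in `A` with speed `D`. -/
def IsLionManPlay (A : Set X) (D : ℝ) (L M : ℕ → X) : Prop :=
  (∀ n, L n ∈ A) ∧ (∀ n, M n ∈ A) ∧
  (∀ n, ∃ S : Set X, IsGeodesicSegment S (L n) (M n) ∧ L (n+1) ∈ S) ∧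
  (∀ n, dist (L n) (L (n+1)) = min D (dist (L n) (M n))) ∧
  (∀ n, dist (M n) (M (n+1)) ≤ D)

/-- The lion wins a play if `d(L_{n+1}, M_n) → 0`. -/
def LionWins (L M : ℕ → X) : Prop :=
  Filter.Tendsto (fun n => dist (L (n+1)) (M n)) Filter.atTop (nhds 0)

/-- The lion always wins the Lion-Man game played in `A`. -/
def LionAlwaysWins (A : Set X) : Prop :=
  ∀ D > (0:ℝ), ∀ L M : ℕ → X, IsLionManPlay A D L M → LionWins L M

end Defs

/-- A convex subset of a normed space is linearly bounded if its intersection with every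
line is bounded. -/
def LinearlyBounded {E : Type*} [NormedAddCommGroup E] [NormedSpace ℝ E] (A : Set E) :
    Prop :=
  ∀ p v : E, Bornology.IsBounded (A ∩ {x | ∃ t : ℝ, x = p + t • v})

/-- The set `A = {x ∈ ℓ₂ : 0 ≤ x_n ≤ 10ⁿ for all n ≥ 1}` (here the coordinate of index
`n : ℕ` plays the role of the coordinate `x_{n+1}`). -/
def ASet : Set (lp (fun _ : ℕ => ℝ) 2) :=
  {x | ∀ n : ℕ, 0 ≤ x n ∧ x n ≤ 10 ^ (n + 1)}

/-- The point `x^k`, whose first `k` coordinates are `10, 10², …, 10^k` and whose other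
coordinates vanish. -/
noncomputable def xk (k : ℕ) : lp (fun _ : ℕ => ℝ) 2 :=
  ∑ i ∈ Finset.range k, lp.single 2 i ((10:ℝ) ^ (i + 1))

/-- `a_k = ∑_{n=1}^k 10ⁿ`. -/
noncomputable def ak (k : ℕ) : ℝ := ∑ i ∈ Finset.range k, (10:ℝ) ^ (i + 1)

/-- The set `A` above is closed, convex and linearly bounded; the points `x^k` belong to
`A`; the piecewise linear curve `γ` through the points `x^k` (with `γ(a_k) = x^k`)
satisfies `√(3/11)·|s-t| ≤ ‖γ(s) - γ(t)‖ ≤ |s-t|` for all `s, t ≥ 0` and stays in `A`;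
in particular, `A` contains a `√(11/3)`-quasi-geodesic ray. -/
lemma ak_zero : ak 0 = 0 := by simp [ak]
lemma ak_succ (k : ℕ) : ak (k+1) = ak k + 10 ^ (k+1) := Finset.sum_range_succ _ _
lemma ak_nonneg (k : ℕ) : 0 ≤ ak k := Finset.sum_nonneg fun i _ => by positivity
lemma ak_strictMono : StrictMono ak := strictMono_nat_of_lt_succ fun k => by
  rw [ak_succ]; nlinarith [pow_pos (by norm_num : (0:ℝ) < 10) (k+1)]
lemma ak_mono : Monotone ak := ak_strictMono.monotone
lemma nine_ak_le (m : ℕ) : 9 * ak m ≤ 10 ^ (m+1) := by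
  induction m with
  | zero => norm_num [ak_zero]
  | succ n ih => rw [ak_succ]; ring_nf; ring_nf at ih; nlinarith [pow_pos (by norm_num : (0:ℝ) < 10) (n+1)]
lemma exists_ak_gt (t : ℝ) : ∃ k, t < ak (k+1) := by
  obtain ⟨n, hn⟩ := exists_nat_gt t
  refine ⟨n, hn.trans_le ?_⟩
  calc (n:ℝ) ≤ n + 1 := by linarith
  _ = ∑ i ∈ Finset.range (n+1), (1:ℝ) := by simp
  _ ≤ ak (n+1) := Finset.sum_le_sum fun i _ => one_le_pow₀ (by norm_num)

lemma xk_apply (k n : ℕ) : (xk k) n = if n < k then (10:ℝ) ^ (n+1) else 0 := by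
  rw [xk, lp.coeFn_sum, Finset.sum_apply]
  simp [lp.single_apply, Finset.mem_range]

lemma xk_succ (k : ℕ) : xk (k+1) = xk k + lp.single 2 k ((10:ℝ) ^ (k+1)) := by
  rw [xk, Finset.sum_range_succ]; rfl

lemma interp_eq (k : ℕ) (t : ℝ) :
    (1 - (t - ak k) / 10 ^ (k + 1)) • xk k + ((t - ak k) / 10 ^ (k + 1)) • xk (k + 1)
      = xk k + lp.single 2 k (t - ak k) := by
  rw [xk_succ]
  have h10 : ((10:ℝ) ^ (k+1)) ≠ 0 := by positivity
  have : lp.single 2 k (t - ak k) = ((t - ak k) / 10 ^ (k + 1)) • (lp.single 2 k ((10:ℝ)^(k+1)) : lp (fun _ : ℕ => ℝ) 2) := by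
    rw [← lp.single_smul]
    congr 1
    simp [smul_eq_mul]
  rw [this]
  module






lemma single_at (i : ℕ) (a : ℝ) (n : ℕ) :
    (lp.single 2 i a : lp (fun _ : ℕ => ℝ) 2) n = if n = i then a else 0 := by
  by_cases h : n = i
  · subst h; simp [lp.single_apply_self]
  · simp [lp.single_apply_ne 2 i _ h, h]

lemma diff_eq (k m : ℕ) (hkm : k ≤ m) (s t : ℝ) (hks : ak k ≤ s) (hsk : s < ak (k+1))
    (hmt : ak m ≤ t) (htm : t < ak (m+1)) (hst : s ≤ t) :
    (xk m + lp.single 2 m (t - ak m)) - (xk k + lp.single 2 k (s - ak k)) =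
      ∑ i ∈ Finset.Icc k m, lp.single 2 i (min (ak (i+1)) t - max (ak i) s) := by
  apply lp.ext; funext n
  rw [lp.coeFn_sub, Pi.sub_apply, lp.coeFn_add, Pi.add_apply, lp.coeFn_add, Pi.add_apply,
    lp.coeFn_sum, Finset.sum_apply, xk_apply, xk_apply, single_at, single_at,
    Finset.sum_congr rfl (fun i _ => single_at i _ n), Finset.sum_ite_eq]
  simp only [Finset.mem_Icc]
  rcases lt_trichotomy n k with h1 | h1 | h1
  · have hnm : n < m := lt_of_lt_of_le h1 hkm
    have a1 : n ≠ k := by omega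
    have a2 : n ≠ m := by omega
    have a3 : ¬ k ≤ n := by omega
    simp [h1, hnm, a1, a2, a3]
  · subst h1
    rcases eq_or_lt_of_le hkm with h2 | h2
    · subst h2
      simp [min_eq_right htm.le, max_eq_right hks]
    · have hmin : min (ak (n+1)) t = ak (n+1) := min_eq_left ((ak_mono h2).trans hmt)
      have a1 : ¬ n < n := by omega
      have a2 : n ≠ m := by omega
      have a3 : n ≤ m := by omega
      simp [h2, hmin, max_eq_right hks, a1, a2, a3]
      linarith [ak_succ n]
  · rcases lt_trichotomy n m with h2 | h2 | h2
    · have hmin : min (ak (n+1)) t = ak (n+1) := min_eq_left ((ak_mono h2).trans hmt)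
      have hmax : max (ak n) s = ak n := max_eq_left (le_of_lt (lt_of_lt_of_le hsk (ak_mono h1)))
      have a1 : ¬ n < k := by omega
      have a2 : n ≠ k := by omega
      have a3 : n ≠ m := by omega
      have a4 : k ≤ n := by omega
      have a5 : n ≤ m := by omega
      simp [h2, hmin, hmax, a1, a2, a3, a4, a5]
      linarith [ak_succ n]
    · subst h2
      have hmax : max (ak n) s = ak n := max_eq_left (le_of_lt (lt_of_lt_of_le hsk (ak_mono h1)))
      have a1 : ¬ n < k := by omega
      have a2 : n ≠ k := by omega
      have a4 : k ≤ n := by omega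
      simp [hmax, min_eq_right htm.le, a1, a2, a4]
    · have a1 : ¬ n < k := by omega
      have a2 : ¬ n < m := by omega
      have a3 : n ≠ k := by omega
      have a4 : n ≠ m := by omega
      have a5 : ¬ n ≤ m := by omega
      simp [a1, a2, a3, a4, a5]

lemma norm_sum_single_sq (F : Finset ℕ) (c : ℕ → ℝ) :
    ‖(∑ i ∈ F, lp.single 2 i (c i) : lp (fun _ : ℕ => ℝ) 2)‖ ^ 2 = ∑ i ∈ F, (c i) ^ 2 := by
  have h := lp.norm_sum_single (p := (2:ENNReal)) (E := fun _ : ℕ => ℝ) (by norm_num) c F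
  have hr : ∀ x : ℝ, x ^ ((2:ENNReal)).toReal = x ^ (2:ℕ) := fun x => by
    rw [show ((2:ENNReal)).toReal = ((2:ℕ):ℝ) by norm_num, Real.rpow_natCast]
  simp only [hr] at h
  simpa [Real.norm_eq_abs, sq_abs] using h

set_option linter.unusedVariables false in
lemma sum_delta (k m : ℕ) (hkm : k ≤ m) (s t : ℝ) (hks : ak k ≤ s) (hsk : s < ak (k+1))
    (hmt : ak m ≤ t) (htm : t < ak (m+1)) (hst : s ≤ t) :
    ∑ i ∈ Finset.Icc k m, (min (ak (i+1)) t - max (ak i) s) = t - s := by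
  obtain ⟨g, hg⟩ : ∃ g : ℕ → ℝ, g = fun j => max (min (ak j) t) s := ⟨_, rfl⟩
  have key : ∀ i ∈ Finset.Icc k m,
      min (ak (i+1)) t - max (ak i) s = g (i+1) - g i := by
    intro i hi
    obtain ⟨hik, him⟩ := Finset.mem_Icc.1 hi
    have e1 : max (min (ak (i+1)) t) s = min (ak (i+1)) t := by
      refine max_eq_left (le_min ?_ hst)
      exact le_of_lt (lt_of_lt_of_le hsk (ak_mono (by omega)))
    have e2 : min (ak i) t = ak i := min_eq_left ((ak_mono him).trans hmt)
    simp only [hg, e1, e2]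
  rw [Finset.sum_congr rfl key]
  have : Finset.Icc k m = Finset.Ico k (m+1) := by rw [Finset.Ico_add_one_right_eq_Icc]
  rw [this, Finset.sum_Ico_eq_sub _ (by omega), Finset.sum_range_sub, Finset.sum_range_sub]
  have g1 : g (m+1) = t := by
    rw [hg]; dsimp only; rw [min_eq_right htm.le, max_eq_left hst]
  have g2 : g k = s := by
    rw [hg]; dsimp only; rw [min_eq_left (hks.trans hst), max_eq_right hks]
  rw [g1, g2]
  ring

set_option linter.unusedVariables false in
lemma quant (k m : ℕ) (hkm : k ≤ m) (s t : ℝ) (hks : ak k ≤ s) (hsk : s < ak (k+1))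
    (hmt : ak m ≤ t) (htm : t < ak (m+1)) (hst : s ≤ t) :
    3/11 * (t - s)^2 ≤ ∑ i ∈ Finset.Icc k m, (min (ak (i+1)) t - max (ak i) s)^2 := by
  have hLsum := sum_delta k m hkm s t hks hsk hmt htm hst
  have hnn : ∀ i ∈ Finset.Icc k m, 0 ≤ min (ak (i+1)) t - max (ak i) s := by
    intro i hi
    obtain ⟨hik, him⟩ := Finset.mem_Icc.1 hi
    have h1 : ak i ≤ ak (i+1) := ak_mono (by omega)
    have h2 : s ≤ ak (i+1) := le_of_lt (lt_of_lt_of_le hsk (ak_mono (by omega)))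
    have h3 : ak i ≤ t := (ak_mono him).trans hmt
    simp only [sub_nonneg, le_min_iff, max_le_iff]
    exact ⟨⟨h1, h2⟩, ⟨h3, hst⟩⟩
  rcases Nat.lt_or_ge m (k+2) with hm2 | hm2
  · rcases Nat.eq_or_lt_of_le hkm with h2 | h2
    · subst h2
      rw [← hLsum, Finset.Icc_self, Finset.sum_singleton, Finset.sum_singleton]
      nlinarith [sq_nonneg (min (ak (k+1)) t - max (ak k) s)]
    · have hm : m = k + 1 := by omega
      subst hm
      rw [← hLsum, show Finset.Icc k (k+1) = {k, k+1} by ext x; simp [Finset.mem_Icc]; omega]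
      rw [Finset.sum_pair (by omega : k ≠ k + 1), Finset.sum_pair (by omega : k ≠ k + 1)]
      nlinarith [sq_nonneg (min (ak (k+1)) t - max (ak k) s - (min (ak (k+1+1)) t - max (ak (k+1)) s)),
        sq_nonneg (min (ak (k+1)) t - max (ak k) s + (min (ak (k+1+1)) t - max (ak (k+1)) s))]
  · -- m ≥ k + 2
    obtain ⟨p, rfl⟩ : ∃ p, m = p + 1 := ⟨m - 1, by omega⟩
    have hpk : k + 1 ≤ p := by omega
    have hΔp : min (ak (p+1)) t - max (ak p) s = 10 ^ (p+1) := by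
      rw [min_eq_left hmt, max_eq_left (le_of_lt (lt_of_lt_of_le hsk (ak_mono (by omega)))),
        ak_succ]
      ring
    have hΔm : min (ak (p+1+1)) t - max (ak (p+1)) s = t - ak (p+1) := by
      rw [min_eq_right htm.le, max_eq_left (le_of_lt (lt_of_lt_of_le hsk (ak_mono (by omega))))]
    have hsub : ({p, p+1} : Finset ℕ) ⊆ Finset.Icc k (p+1) := by
      intro i hi
      simp only [Finset.mem_insert, Finset.mem_singleton] at hi
      rcases hi with rfl | rfl <;> simp [Finset.mem_Icc] <;> omega
    have hge : (10:ℝ) ^ (2*(p+1)) + (t - ak (p+1))^2 ≤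
        ∑ i ∈ Finset.Icc k (p+1), (min (ak (i+1)) t - max (ak i) s)^2 := by
      refine le_trans (le_of_eq ?_) (Finset.sum_le_sum_of_subset_of_nonneg hsub
        (fun i hi _ => sq_nonneg _))
      rw [Finset.sum_pair (by omega : p ≠ p + 1), hΔp, hΔm, ← pow_mul]
      ring_nf
    have hc : 0 ≤ t - ak (p+1) := by linarith
    have hL : t - s ≤ 10/9 * 10 ^ (p+1) + (t - ak (p+1)) := by
      have h9 := nine_ak_le (p+1)
      have hs0 : 0 ≤ s := le_trans (ak_nonneg k) hks
      have h10 : (10:ℝ)^(p+1+1) = 10 * 10^(p+1) := by ring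
      have : ak (p+1) ≤ 10/9 * 10^(p+1) := by linarith
      linarith
    have hP : (0:ℝ) < 10 ^ (p+1) := by positivity
    have hL0 : 0 ≤ t - s := by linarith
    have hPP : (10:ℝ)^(2*(p+1)) = 10^(p+1) * 10^(p+1) := by rw [two_mul, pow_add]
    rw [hPP] at hge
    nlinarith [sq_nonneg ((t - ak (p+1)) - 5/12 * 10 ^ (p+1)), sq_nonneg (t - s),
      mul_le_mul hL hL hL0 (by linarith : (0:ℝ) ≤ 10/9 * 10 ^ (p+1) + (t - ak (p+1))), hge, hc, hP]




lemma exists_interval (t : ℝ) (ht : 0 ≤ t) : ∃ k, ak k ≤ t ∧ t < ak (k+1) := by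
  refine ⟨Nat.find (exists_ak_gt t), ?_, Nat.find_spec (exists_ak_gt t)⟩
  rcases Nat.eq_zero_or_pos (Nat.find (exists_ak_gt t)) with h | h
  · rw [h, ak_zero]; exact ht
  · obtain ⟨j, hj⟩ : ∃ j, Nat.find (exists_ak_gt t) = j + 1 := ⟨_, (Nat.succ_pred_eq_of_pos h).symm⟩
    rw [hj]
    have := Nat.find_min (exists_ak_gt t) (by omega : j < Nat.find (exists_ak_gt t))
    exact not_lt.1 this

section Main
variable (γ : ℝ → lp (fun _ : ℕ => ℝ) 2)
  (h : ∀ k : ℕ, ∀ t ∈ Set.Ico (ak k) (ak (k + 1)),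
    γ t = (1 - (t - ak k) / 10 ^ (k + 1)) • xk k + ((t - ak k) / 10 ^ (k + 1)) • xk (k + 1))

include h

lemma gamma_eq (k : ℕ) (t : ℝ) (ht : t ∈ Set.Ico (ak k) (ak (k+1))) :
    γ t = xk k + lp.single 2 k (t - ak k) := by rw [h k t ht, interp_eq]

lemma gamma_mem (t : ℝ) (ht : 0 ≤ t) : γ t ∈ ASet := by
  obtain ⟨k, hk1, hk2⟩ := exists_interval t ht
  rw [gamma_eq γ h k t ⟨hk1, hk2⟩]
  intro n
  rw [lp.coeFn_add, Pi.add_apply, xk_apply, single_at]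
  have hak := ak_succ k
  rcases lt_trichotomy n k with h1 | h1 | h1
  · have : n ≠ k := by omega
    rw [if_pos h1, if_neg this, add_zero]
    constructor
    · positivity
    · exact le_rfl
  · subst h1
    rw [if_neg (lt_irrefl n), if_pos rfl]
    constructor
    · linarith
    · linarith
  · have h2 : ¬ n < k := by omega
    have h3 : n ≠ k := by omega
    rw [if_neg h2, if_neg h3, add_zero]
    constructor
    · exact le_rfl
    · positivity

lemma gamma_norm_le (s t : ℝ) (hs : 0 ≤ s) (ht : 0 ≤ t) (hst : s ≤ t) :
    Real.sqrt (3/11) * (t - s) ≤ ‖γ t - γ s‖ ∧ ‖γ t - γ s‖ ≤ t - s := by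
  obtain ⟨k, hk1, hk2⟩ := exists_interval s hs
  obtain ⟨m, hm1, hm2⟩ := exists_interval t ht
  have hkm : k ≤ m := by
    by_contra hcon
    have : m + 1 ≤ k := by omega
    have := ak_mono this
    linarith
  rw [gamma_eq γ h k s ⟨hk1, hk2⟩, gamma_eq γ h m t ⟨hm1, hm2⟩,
    diff_eq k m hkm s t hk1 hk2 hm1 hm2 hst]
  have hnorm := norm_sum_single_sq (Finset.Icc k m) (fun i => min (ak (i+1)) t - max (ak i) s)
  have hsum := sum_delta k m hkm s t hk1 hk2 hm1 hm2 hst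
  have hq := quant k m hkm s t hk1 hk2 hm1 hm2 hst
  have hnn : ∀ i ∈ Finset.Icc k m, 0 ≤ min (ak (i+1)) t - max (ak i) s := by
    intro i hi
    obtain ⟨hik, him⟩ := Finset.mem_Icc.1 hi
    simp only [sub_nonneg, le_min_iff, max_le_iff]
    exact ⟨⟨ak_mono (by omega), le_of_lt (lt_of_lt_of_le hk2 (ak_mono (by omega)))⟩,
      ⟨(ak_mono him).trans hm1, hst⟩⟩
  set v : lp (fun _ : ℕ => ℝ) 2 := ∑ i ∈ Finset.Icc k m, lp.single 2 i (min (ak (i+1)) t - max (ak i) s) with hv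
  have hub : ‖v‖^2 ≤ (t - s)^2 := by
    rw [hnorm, ← hsum]
    exact Finset.sum_sq_le_sq_sum_of_nonneg hnn
  have hlb : (Real.sqrt (3/11) * (t - s))^2 ≤ ‖v‖^2 := by
    rw [hnorm, mul_pow, Real.sq_sqrt (by norm_num : (0:ℝ) ≤ 3/11)]
    exact hq
  constructor
  · have := Real.sqrt_le_sqrt hlb
    rwa [Real.sqrt_sq (mul_nonneg (Real.sqrt_nonneg _) (by linarith)), Real.sqrt_sq (norm_nonneg v)] at this
  · have := Real.sqrt_le_sqrt hub
    rwa [Real.sqrt_sq (norm_nonneg v), Real.sqrt_sq (by linarith)] at this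

lemma gamma_norm (s t : ℝ) (hs : 0 ≤ s) (ht : 0 ≤ t) :
    Real.sqrt (3/11) * |s - t| ≤ ‖γ s - γ t‖ ∧ ‖γ s - γ t‖ ≤ |s - t| := by
  rcases le_total s t with hst | hst
  · have := gamma_norm_le γ h s t hs ht hst
    rw [abs_sub_comm, abs_of_nonneg (by linarith), norm_sub_rev]
    exact this
  · have := gamma_norm_le γ h t s ht hs hst
    rw [abs_of_nonneg (by linarith)]
    exact this

end Main

lemma eval_continuous (n : ℕ) : Continuous (fun x : lp (fun _ : ℕ => ℝ) 2 => x n) := by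
  refine (LipschitzWith.mk_one fun x y => ?_).continuous
  calc dist (x n) (y n) = ‖(x - y) n‖ := by
        rw [dist_eq_norm, lp.coeFn_sub, Pi.sub_apply]
  _ ≤ ‖x - y‖ := lp.norm_apply_le_norm (by norm_num) (x - y) n
  _ = dist x y := (dist_eq_norm x y).symm

lemma ASet_closed : IsClosed ASet := by
  have : ASet = ⋂ n, (fun x : lp (fun _ : ℕ => ℝ) 2 => x n) ⁻¹' (Set.Icc 0 (10^(n+1))) := by
    ext x
    simp only [ASet, Set.mem_setOf_eq, Set.mem_iInter, Set.mem_preimage, Set.mem_Icc]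
  rw [this]
  exact isClosed_iInter fun n => isClosed_Icc.preimage (eval_continuous n)

lemma ASet_convex : Convex ℝ ASet := by
  intro x hx y hy a b ha hb hab
  intro n
  have hxn := hx n
  have hyn := hy n
  have : (a • x + b • y) n = a * x n + b * y n := by
    rw [lp.coeFn_add, Pi.add_apply, lp.coeFn_smul, lp.coeFn_smul]
    rfl
  rw [this]
  constructor
  · have := mul_nonneg ha hxn.1
    have := mul_nonneg hb hyn.1
    linarith
  · nlinarith [mul_le_mul_of_nonneg_left hxn.2 ha, mul_le_mul_of_nonneg_left hyn.2 hb]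

lemma ASet_linbdd : ∀ p v : lp (fun _ : ℕ => ℝ) 2,
    Bornology.IsBounded (ASet ∩ {x | ∃ t : ℝ, x = p + t • v}) := by
  intro p v
  by_cases hv : v = 0
  · subst hv
    refine Bornology.IsBounded.subset (Bornology.isBounded_singleton (x := p)) ?_
    rintro x ⟨-, t, rfl⟩
    simp
  · obtain ⟨n, hn⟩ : ∃ n, v n ≠ 0 := by
      by_contra hcon
      push_neg at hcon
      exact hv (lp.ext (funext fun n => hcon n))
    refine Bornology.IsBounded.subset (Metric.isBounded_closedBall
      (x := (0 : lp (fun _ : ℕ => ℝ) 2)) (r := ‖p‖ + ((10^(n+1) + |p n|)/|v n|) * ‖v‖)) ?_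
    rintro x ⟨hxA, t, rfl⟩
    have hxn := hxA n
    have hco : (p + t • v) n = p n + t * v n := by
      rw [lp.coeFn_add, Pi.add_apply, lp.coeFn_smul]; rfl
    rw [hco] at hxn
    have habs : |t| * |v n| ≤ 10^(n+1) + |p n| := by
      rw [← abs_mul]
      have h1 : t * v n = (p n + t * v n) - p n := by ring
      rw [h1]
      have h2 : |p n + t * v n| ≤ 10^(n+1) := abs_le.2 ⟨by linarith, hxn.2⟩
      calc |(p n + t * v n) - p n| ≤ |p n + t * v n| + |p n| := abs_sub _ _
      _ ≤ 10^(n+1) + |p n| := by linarith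
    have hvpos : 0 < |v n| := abs_pos.2 hn
    have ht : |t| ≤ (10^(n+1) + |p n|)/|v n| := (le_div_iff₀ hvpos).2 habs
    rw [Metric.mem_closedBall, dist_zero_right]
    calc ‖p + t • v‖ ≤ ‖p‖ + ‖t • v‖ := norm_add_le _ _
    _ = ‖p‖ + |t| * ‖v‖ := by rw [norm_smul, Real.norm_eq_abs]
    _ ≤ ‖p‖ + ((10^(n+1) + |p n|)/|v n|) * ‖v‖ := by
        have := mul_le_mul_of_nonneg_right ht (norm_nonneg v)
        linarith

lemma xk_mem (k : ℕ) : xk k ∈ ASet := by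
  intro n
  rw [xk_apply]
  by_cases h : n < k
  · rw [if_pos h]; constructor
    · positivity
    · exact le_rfl
  · rw [if_neg h]; constructor
    · exact le_rfl
    · positivity

noncomputable def Kt (t : ℝ) : ℕ := Nat.find (exists_ak_gt t)

noncomputable def gammaC (t : ℝ) : lp (fun _ : ℕ => ℝ) 2 :=
  (1 - (t - ak (Kt t)) / 10 ^ (Kt t + 1)) • xk (Kt t)
    + ((t - ak (Kt t)) / 10 ^ (Kt t + 1)) • xk (Kt t + 1)

lemma gammaC_hyp : ∀ k : ℕ, ∀ t ∈ Set.Ico (ak k) (ak (k + 1)),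
    gammaC t = (1 - (t - ak k) / 10 ^ (k + 1)) • xk k
      + ((t - ak k) / 10 ^ (k + 1)) • xk (k + 1) := by
  intro k t ht
  have hKt : Kt t = k := by
    rw [Kt, Nat.find_eq_iff]
    exact ⟨ht.2, fun j hj => not_lt.2 (le_trans (ak_mono (by omega)) ht.1)⟩
  rw [gammaC, hKt]

theorem stmt8 :
    IsClosed ASet ∧ Convex ℝ ASet ∧ LinearlyBounded ASet ∧ (∀ k, xk k ∈ ASet) ∧
    (∀ γ : ℝ → lp (fun _ : ℕ => ℝ) 2,
      (∀ k : ℕ, ∀ t ∈ Set.Ico (ak k) (ak (k + 1)),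
        γ t = (1 - (t - ak k) / 10 ^ (k + 1)) • xk k + ((t - ak k) / 10 ^ (k + 1)) • xk (k + 1)) →
      (∀ t ∈ Set.Ici (0:ℝ), γ t ∈ ASet) ∧
      ∀ s ∈ Set.Ici (0:ℝ), ∀ t ∈ Set.Ici (0:ℝ),
        Real.sqrt (3 / 11) * |s - t| ≤ ‖γ s - γ t‖ ∧ ‖γ s - γ t‖ ≤ |s - t|) ∧
    (∃ γ : ℝ → lp (fun _ : ℕ => ℝ) 2,
      (∀ eps > (0:ℝ), IsQuasiGeodesicRay (Real.sqrt (11 / 3)) eps γ) ∧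
      ∀ t ∈ Set.Ici (0:ℝ), γ t ∈ ASet) := by
  refine ⟨ASet_closed, ASet_convex, ASet_linbdd, xk_mem,
    fun γ h => ⟨fun t ht => gamma_mem γ h t ht, fun s hs t ht => gamma_norm γ h s t hs ht⟩,
    ⟨gammaC, ?_, fun t ht => gamma_mem gammaC gammaC_hyp t ht⟩⟩
  intro eps heps s hs t ht
  have hb := gamma_norm gammaC gammaC_hyp s t hs ht
  have hd : dist (gammaC s) (gammaC t) = ‖gammaC s - gammaC t‖ := dist_eq_norm _ _
  have hsqm : Real.sqrt (3/11) * Real.sqrt (11/3) = 1 := by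
    rw [← Real.sqrt_mul (by norm_num)]
    norm_num
  have hpos : 0 < Real.sqrt (11/3) := Real.sqrt_pos.2 (by norm_num)
  have hinv : 1 / Real.sqrt (11/3) = Real.sqrt (3/11) := by
    rw [eq_comm, eq_div_iff hpos.ne']
    exact hsqm
  have hone : 1 ≤ Real.sqrt (11/3) := by
    rw [show (1:ℝ) = Real.sqrt 1 from (Real.sqrt_one).symm]
    exact Real.sqrt_le_sqrt (by norm_num)
  constructor
  · rw [hd, hinv]
    linarith [hb.1]
  · rw [hd]
    have habs : |s - t| ≤ Real.sqrt (11/3) * |s - t| := by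
      nlinarith [abs_nonneg (s - t)]
    linarith [hb.2]
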